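/- arXiv:0805.2447 — 4 statements merged into one kernel-verified Lean document; each statement's English description precedes it below -/
import Mathlib

section
/- Let X and Y be normed spaces over ℂ, let Ψ : X → Y be a continuous linear map with ‖Ψ‖ ≤ 1, and let c > 0 be such that ‖Ψ(x)‖ ≥ c·‖x‖ for all x ∈ X. If u ∈ X satisfies ‖u‖ = 1 and ‖Ψ(u)‖ = 1, then c · n(Y; Ψ(u)) ≤ n(X; u). -/
/-- `S(X;u)`: the set of norm-one continuous linear functionals attaining value `1` at `u`. -/
def geomStates {X : Type*} [NormedAddCommGroup X] [NormedSpace ℂ X] (u : X) :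
    Set (X →L[ℂ] ℂ) :=
  {f | ‖f‖ = 1 ∧ f u = 1}

/-- `γ^u(x) = sup {|f(x)| : f ∈ S(X;u)}`. -/
noncomputable def geomGamma {X : Type*} [NormedAddCommGroup X] [NormedSpace ℂ X]
    (u x : X) : ℝ :=
  sSup {r : ℝ | ∃ f ∈ geomStates u, r = ‖f x‖}

/-- `n(X;u) = inf {γ^u(x) : ‖x‖ = 1}`. -/
noncomputable def geomN {X : Type*} [NormedAddCommGroup X] [NormedSpace ℂ X] (u : X) : ℝ :=
  sInf {r : ℝ | ∃ x : X, ‖x‖ = 1 ∧ r = geomGamma u x}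

/-! Every state `g` of `Y` at `Ψ u` pulls back to a state `g ∘ Ψ` of `X` at `u`, so
`γ^{Ψu}(Ψ x) ≤ γ^u(x)`. Since `γ` is absolutely homogeneous, `‖y‖ · n(Y;Ψu) ≤ γ^{Ψu}(y)`, and for
a unit vector `x` we have `c ≤ ‖Ψ x‖`; chaining these and taking the infimum over `x` gives the
claim. -/

open Pointwise

section geom

variable {X : Type*} [NormedAddCommGroup X] [NormedSpace ℂ X]

lemma geomGamma_bddAbove (u x : X) : BddAbove {r : ℝ | ∃ f ∈ geomStates u, r = ‖f x‖} := by
  refine ⟨‖x‖, ?_⟩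
  rintro r ⟨f, ⟨hf, -⟩, rfl⟩
  simpa [hf] using f.le_opNorm x

lemma norm_apply_le_geomGamma {u : X} {f : X →L[ℂ] ℂ} (hf : f ∈ geomStates u) (x : X) :
    ‖f x‖ ≤ geomGamma u x :=
  le_csSup (geomGamma_bddAbove u x) ⟨f, hf, rfl⟩

lemma geomGamma_nonneg (u x : X) : 0 ≤ geomGamma u x :=
  Real.sSup_nonneg <| by rintro r ⟨f, -, rfl⟩; exact norm_nonneg _

lemma geomGamma_smul (u x : X) (a : ℂ) : geomGamma u (a • x) = ‖a‖ * geomGamma u x := by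
  have hset : {r : ℝ | ∃ f ∈ geomStates u, r = ‖f (a • x)‖} =
      ‖a‖ • {r : ℝ | ∃ f ∈ geomStates u, r = ‖f x‖} := by
    ext r
    simp only [Set.mem_smul_set, Set.mem_ofPred_eq, map_smul, smul_eq_mul, norm_mul]
    constructor
    · rintro ⟨f, hf, rfl⟩
      exact ⟨_, ⟨f, hf, rfl⟩, rfl⟩
    · rintro ⟨_, ⟨f, hf, rfl⟩, rfl⟩
      exact ⟨f, hf, rfl⟩
  rw [geomGamma, hset, Real.sSup_smul_of_nonneg (norm_nonneg a), smul_eq_mul, geomGamma]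

lemma geomN_nonneg (u : X) : 0 ≤ geomN u :=
  Real.sInf_nonneg <| by rintro r ⟨x, -, rfl⟩; exact geomGamma_nonneg u x

lemma geomN_le_geomGamma (u : X) {x : X} (hx : ‖x‖ = 1) : geomN u ≤ geomGamma u x :=
  csInf_le ⟨0, by rintro r ⟨z, -, rfl⟩; exact geomGamma_nonneg u z⟩ ⟨x, hx, rfl⟩

lemma norm_mul_geomN_le_geomGamma (u x : X) : ‖x‖ * geomN u ≤ geomGamma u x := by
  rcases eq_or_ne x 0 with rfl | hx
  · simpa using geomGamma_nonneg u 0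
  have hxn : ‖x‖ ≠ 0 := norm_ne_zero_iff.mpr hx
  have hunit : ‖((‖x‖ : ℂ)⁻¹) • x‖ = 1 := by simp [norm_smul, hxn]
  calc ‖x‖ * geomN u ≤ ‖x‖ * geomGamma u (((‖x‖ : ℂ)⁻¹) • x) :=
        mul_le_mul_of_nonneg_left (geomN_le_geomGamma u hunit) (norm_nonneg x)
    _ = geomGamma u x := by simp [geomGamma_smul, hxn]

end geom

section map

variable {X Y : Type*} [NormedAddCommGroup X] [NormedSpace ℂ X]
  [NormedAddCommGroup Y] [NormedSpace ℂ Y] {Ψ : X →L[ℂ] Y} {u : X}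

lemma comp_mem_geomStates (hΨ : ‖Ψ‖ ≤ 1) (hu : ‖u‖ ≤ 1) {g : Y →L[ℂ] ℂ}
    (hg : g ∈ geomStates (Ψ u)) : g.comp Ψ ∈ geomStates u := by
  obtain ⟨hg_norm, hg_u⟩ := hg
  have happ : g.comp Ψ u = 1 := hg_u
  refine ⟨le_antisymm ?_ ?_, happ⟩
  · calc ‖g.comp Ψ‖ ≤ ‖g‖ * ‖Ψ‖ := g.opNorm_comp_le Ψ
      _ ≤ 1 := by rwa [hg_norm, one_mul]
  · simpa [happ] using ((g.comp Ψ).le_opNorm u).trans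
      (mul_le_of_le_one_right (norm_nonneg _) hu)

lemma geomGamma_map_le (hΨ : ‖Ψ‖ ≤ 1) (hu : ‖u‖ ≤ 1) (x : X) :
    geomGamma (Ψ u) (Ψ x) ≤ geomGamma u x := by
  refine Real.sSup_le ?_ (geomGamma_nonneg u x)
  rintro r ⟨g, hg, rfl⟩
  exact norm_apply_le_geomGamma (comp_mem_geomStates hΨ hu hg) x

end map

theorem geomN_le_of_contractive_topological_injection_general
    {X Y : Type*} [NormedAddCommGroup X] [NormedSpace ℂ X]
    [NormedAddCommGroup Y] [NormedSpace ℂ Y]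
    (Ψ : X →L[ℂ] Y) (hΨ : ‖Ψ‖ ≤ 1) (c : ℝ)
    (hinj : ∀ x : X, c * ‖x‖ ≤ ‖Ψ x‖)
    (u : X) (hu : ‖u‖ = 1) :
    c * geomN (Ψ u) ≤ geomN u := by
  refine le_csInf ⟨_, u, hu, rfl⟩ ?_
  rintro r ⟨x, hx, rfl⟩
  have hc : c ≤ ‖Ψ x‖ := by simpa [hx] using hinj x
  calc c * geomN (Ψ u) ≤ ‖Ψ x‖ * geomN (Ψ u) :=
        mul_le_mul_of_nonneg_right hc (geomN_nonneg _)
    _ ≤ geomGamma (Ψ u) (Ψ x) := norm_mul_geomN_le_geomGamma _ _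
    _ ≤ geomGamma u x := geomGamma_map_le hΨ hu.le x

theorem geomN_le_of_contractive_topological_injection
    {X Y : Type*} [NormedAddCommGroup X] [NormedSpace ℂ X]
    [NormedAddCommGroup Y] [NormedSpace ℂ Y]
    (Ψ : X →L[ℂ] Y) (hΨ : ‖Ψ‖ ≤ 1) (c : ℝ) (hc : 0 < c)
    (hinj : ∀ x : X, c * ‖x‖ ≤ ‖Ψ x‖)
    (u : X) (hu : ‖u‖ = 1) (hΨu : ‖Ψ u‖ = 1) :
    c * geomN (Ψ u) ≤ geomN u :=
  geomN_le_of_contractive_topological_injection_general Ψ hΨ c hinj u hu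
end

section
/- Let X and Y be normed spaces over ℂ, let u ∈ X with ‖u‖ = 1, and let E = X ⊕¹ Y be the product X × Y equipped with the norm ‖(x,y)‖ = ‖x‖ + ‖y‖. Then for every (x,y) ∈ E one has γ^{(u,0)}((x,y)) = γ^u(x) + ‖y‖, where γ^{(u,0)} is computed in E and γ^u is computed in X. -/
/-!
A state of `X ⊕₁ Y` at `(u, 0)` restricts to a state `f` of `X` at `u` on the first factor and
to a functional of norm at most one on the second, so `|F (x, y)| ≤ |f x| + ‖y‖`. Conversely, every
state `f` of `X` at `u` extends by a norming functional of `y`, rotated to the phase of `f x`,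
to a state `F` with `|F (x, y)| = |f x| + ‖y‖`. Hence the two suprema differ exactly by `‖y‖`.
-/

open WithLp

lemma IsLUB.add_of_forall_le_add_of_add_mem {α : Type*} [AddCommGroup α] [PartialOrder α]
    [IsOrderedAddMonoid α] {A B : Set α} {b c : α} (hB : IsLUB B b)
    (hle : ∀ r ∈ A, ∃ s ∈ B, r ≤ s + c) (hmem : ∀ s ∈ B, s + c ∈ A) :
    IsLUB A (b + c) := by
  refine ⟨fun r hr => ?_, fun d hd => ?_⟩
  · obtain ⟨s, hs, hrs⟩ := hle r hr
    exact hrs.trans (add_le_add_left (hB.1 hs) c)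
  · have hdc : d - c ∈ upperBounds B := fun s hs => le_sub_iff_add_le.2 (hd (hmem s hs))
    exact le_sub_iff_add_le.1 (hB.2 hdc)

section WithLpProd

variable {𝕜 X Y Z : Type*} [NontriviallyNormedField 𝕜]
  [SeminormedAddCommGroup X] [NormedSpace 𝕜 X] [SeminormedAddCommGroup Y] [NormedSpace 𝕜 Y]
  [SeminormedAddCommGroup Z] [NormedSpace 𝕜 Z]

variable (𝕜 X Y) in
noncomputable def withLpInl (p : ENNReal) [Fact (1 ≤ p)] : X →ₗᵢ[𝕜] WithLp p (X × Y) where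
  toLinearMap := (WithLp.linearEquiv p 𝕜 (X × Y)).symm.toLinearMap ∘ₗ LinearMap.inl 𝕜 X Y
  norm_map' := norm_toLp_fst p X Y

@[simp]
lemma withLpInl_apply (p : ENNReal) [Fact (1 ≤ p)] (a : X) :
    withLpInl 𝕜 X Y p a = toLp p (a, 0) := rfl

noncomputable def l1Coprod (f : X →L[𝕜] Z) (g : Y →L[𝕜] Z) : WithLp 1 (X × Y) →L[𝕜] Z :=
  (f.coprod g).comp (prodContinuousLinearEquiv 1 𝕜 X Y).toContinuousLinearMap

@[simp]
lemma l1Coprod_apply (f : X →L[𝕜] Z) (g : Y →L[𝕜] Z) (a : X) (b : Y) :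
    l1Coprod f g (toLp 1 (a, b)) = f a + g b := rfl

lemma norm_l1Coprod_le (f : X →L[𝕜] Z) (g : Y →L[𝕜] Z) : ‖l1Coprod f g‖ ≤ max ‖f‖ ‖g‖ := by
  refine ContinuousLinearMap.opNorm_le_bound _ (le_max_of_le_left (norm_nonneg f)) fun z => ?_
  rw [prod_norm_eq_of_L1, mul_add]
  calc ‖l1Coprod f g z‖ = ‖f z.fst + g z.snd‖ := rfl
    _ ≤ ‖f‖ * ‖z.fst‖ + ‖g‖ * ‖z.snd‖ := norm_add_le_of_le (f.le_opNorm _) (g.le_opNorm _)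
    _ ≤ max ‖f‖ ‖g‖ * ‖z.fst‖ + max ‖f‖ ‖g‖ * ‖z.snd‖ := by gcongr <;> simp

lemma norm_apply_toLp_one_le (F : WithLp 1 (X × Y) →L[𝕜] Z) (a : X) (b : Y) :
    ‖F (toLp 1 (a, b))‖ ≤ ‖F (toLp 1 (a, 0))‖ + ‖F‖ * ‖b‖ := by
  have hsplit : toLp 1 (a, b) = toLp 1 (a, 0) + toLp 1 ((0 : X), b) := by simp [← toLp_add]
  rw [hsplit, map_add]
  refine norm_add_le_of_le le_rfl ?_
  simpa using F.le_opNorm (toLp 1 ((0 : X), b))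

end WithLpProd

lemma exists_norm_le_one_norm_add_apply {Y : Type*} [SeminormedAddCommGroup Y]
    [NormedSpace ℂ Y] (z : ℂ) (y : Y) :
    ∃ g : Y →L[ℂ] ℂ, ‖g‖ ≤ 1 ∧ ‖z + g y‖ = ‖z‖ + ‖y‖ := by
  obtain ⟨g, hg, hgy⟩ := exists_dual_vector'' ℂ y
  set c := Complex.exp (z.arg * Complex.I)
  have hc : ‖c‖ = 1 := Complex.norm_exp_ofReal_mul_I _
  refine ⟨c • g, by rwa [norm_smul, hc, one_mul], ?_⟩
  have hz : (‖z‖ : ℂ) * c = z := Complex.norm_mul_exp_arg_mul_I z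
  have hzy : z + (c • g) y = c * ((‖z‖ + ‖y‖ : ℝ) : ℂ) := by
    rw [smul_apply, hgy, smul_eq_mul, Complex.ofReal_add]
    linear_combination -hz
  rw [hzy, norm_mul, hc, one_mul, Complex.norm_of_nonneg (by positivity)]

section GeomStates

variable {X Y : Type*} [NormedAddCommGroup X] [NormedSpace ℂ X]
  [NormedAddCommGroup Y] [NormedSpace ℂ Y]

lemma mem_geomStates_iff {u : X} (hu : ‖u‖ ≤ 1) {f : X →L[ℂ] ℂ} :
    f ∈ geomStates u ↔ ‖f‖ ≤ 1 ∧ f u = 1 := by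
  refine ⟨fun hf => ⟨hf.1.le, hf.2⟩, fun ⟨hf, hfu⟩ => ⟨le_antisymm hf ?_, hfu⟩⟩
  calc (1 : ℝ) = ‖f u‖ := by simp [hfu]
    _ ≤ ‖f‖ * ‖u‖ := f.le_opNorm u
    _ ≤ ‖f‖ := mul_le_of_le_one_right (norm_nonneg f) hu

lemma isLUB_geomGamma {u : X} (hu : ‖u‖ = 1) (x : X) :
    IsLUB {r | ∃ f ∈ geomStates u, r = ‖f x‖} (geomGamma u x) := by
  refine isLUB_csSup ?_ ⟨‖x‖, ?_⟩
  · obtain ⟨f, hf, hfu⟩ := exists_dual_vector ℂ u (norm_ne_zero_iff.1 (by simp [hu]))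
    exact ⟨_, f, ⟨hf, by simp [hfu, hu]⟩, rfl⟩
  · rintro _ ⟨f, hf, rfl⟩
    simpa [hf.1] using f.le_opNorm x

lemma comp_withLpInl_mem_geomStates {u : X} (hu : ‖u‖ ≤ 1) {F : WithLp 1 (X × Y) →L[ℂ] ℂ}
    (hF : F ∈ geomStates (toLp 1 (u, (0 : Y)))) :
    F.comp (withLpInl ℂ X Y 1).toContinuousLinearMap ∈ geomStates u := by
  refine (mem_geomStates_iff hu).2 ⟨?_, hF.2⟩
  calc _ ≤ ‖F‖ * ‖(withLpInl ℂ X Y 1).toContinuousLinearMap‖ := F.opNorm_comp_le _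
    _ ≤ 1 := by
      rw [hF.1, one_mul]
      exact LinearIsometry.norm_toContinuousLinearMap_le _

lemma l1Coprod_mem_geomStates {u : X} (hu : ‖u‖ ≤ 1) {f : X →L[ℂ] ℂ} {g : Y →L[ℂ] ℂ}
    (hf : f ∈ geomStates u) (hg : ‖g‖ ≤ 1) : l1Coprod f g ∈ geomStates (toLp 1 (u, (0 : Y))) := by
  refine (mem_geomStates_iff (by simpa using hu)).2 ⟨?_, by simp [hf.2]⟩
  exact (norm_l1Coprod_le f g).trans (max_le hf.1.le hg)

end GeomStates

theorem geomGamma_prod_l1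
    {X Y : Type*} [NormedAddCommGroup X] [NormedSpace ℂ X]
    [NormedAddCommGroup Y] [NormedSpace ℂ Y]
    (u : X) (hu : ‖u‖ = 1) (x : X) (y : Y) :
    geomGamma ((WithLp.equiv 1 (X × Y)).symm (u, 0))
        ((WithLp.equiv 1 (X × Y)).symm (x, y)) =
      geomGamma u x + ‖y‖ := by
  have hu0 : ‖toLp 1 (u, (0 : Y))‖ = 1 := by simp [hu]
  refine (isLUB_geomGamma hu0 _).unique
    ((isLUB_geomGamma hu x).add_of_forall_le_add_of_add_mem ?_ ?_)
  · rintro _ ⟨F, hF, rfl⟩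
    refine ⟨_, ⟨_, comp_withLpInl_mem_geomStates hu.le hF, rfl⟩, ?_⟩
    simpa [hF.1] using norm_apply_toLp_one_le F x y
  · rintro _ ⟨f, hf, rfl⟩
    obtain ⟨g, hg, hfg⟩ := exists_norm_le_one_norm_add_apply (f x) y
    exact ⟨l1Coprod f g, l1Coprod_mem_geomStates hu.le hf hg, by simp [hfg]⟩
end

section
/- Let X and Y be normed spaces over ℂ, let u ∈ X with ‖u‖ = 1, and let v ∈ Y with ‖v‖ < 1. If f ∈ X* and g ∈ Y* satisfy ‖f‖ + ‖g‖ ≤ 1 and f(u) + g(v) = 1, then g = 0 and ‖f‖ = 1 = f(u). -/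
theorem eq_zero_and_norm_one_of_dual_pair
    {X Y : Type*} [NormedAddCommGroup X] [NormedSpace ℂ X]
    [NormedAddCommGroup Y] [NormedSpace ℂ Y]
    (u : X) (hu : ‖u‖ = 1) (v : Y) (hv : ‖v‖ < 1)
    (f : X →L[ℂ] ℂ) (g : Y →L[ℂ] ℂ)
    (hfg : ‖f‖ + ‖g‖ ≤ 1) (hone : f u + g v = 1) :
    g = 0 ∧ ‖f‖ = 1 ∧ f u = 1 := by
  have hfu : ‖f u‖ ≤ ‖f‖ := by
    have := f.le_opNorm u; rwa [hu, mul_one] at this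
  have hgv : ‖g v‖ ≤ ‖g‖ * ‖v‖ := g.le_opNorm v
  have h1 : (1:ℝ) ≤ ‖f‖ + ‖g‖ * ‖v‖ := by
    calc (1:ℝ) = ‖f u + g v‖ := by rw [hone]; simp
    _ ≤ ‖f u‖ + ‖g v‖ := norm_add_le _ _
    _ ≤ ‖f‖ + ‖g‖ * ‖v‖ := add_le_add hfu hgv
  have hg0 : g = 0 := by
    by_contra h
    have hgpos : 0 < ‖g‖ := norm_pos_iff.mpr h
    have : ‖g‖ * ‖v‖ < ‖g‖ := by
      nlinarith
    linarith
  subst hg0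
  simp only [ContinuousLinearMap.zero_apply, add_zero] at hone
  have hfn : ‖f‖ = 1 := by
    simp only [norm_zero, zero_mul, add_zero] at h1 hfg
    linarith
  exact ⟨rfl, hfn, hone⟩
end

section
/- Let H be a complex Hilbert space and let V be a linear subspace of B(H) containing the identity operator id_H. Let k ≥ 1 and let T = (T_{ij}) be a k×k matrix with all entries T_{ij} ∈ V, regarded as a bounded operator on H^k. Then ‖T‖_{B(H^k)} = sup{‖(φ(T_{ij}))_{i,j}‖_{M_{kn}(ℂ)} : n ≥ 1, φ : V → M_n(ℂ) linear, completely contractive, and φ(id_H) = I_n}. -/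
/-- The operator norm of a complex matrix, as a linear map on Euclidean space. -/
noncomputable def matOpNorm {m n : Type*} [Fintype m] [Fintype n] [DecidableEq n]
    (M : Matrix m n ℂ) : ℝ :=
  ‖LinearMap.toContinuousLinearMap (Matrix.toEuclideanLin M)‖

/-- An `m × m` matrix of bounded operators on `H`, regarded as a bounded operator on `H^m`,
the `ℓ²`-direct sum of `m` copies of `H`. -/
noncomputable def opMatrixToOp {H : Type*} [NormedAddCommGroup H] [InnerProductSpace ℂ H]
    (m : ℕ) (A : Fin m → Fin m → (H →L[ℂ] H)) :
    (PiLp 2 fun _ : Fin m => H) →L[ℂ] (PiLp 2 fun _ : Fin m => H) :=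
  ((PiLp.continuousLinearEquiv 2 ℂ (fun _ : Fin m => H)).symm :
      (∀ _ : Fin m, H) →L[ℂ] PiLp 2 fun _ : Fin m => H) ∘L
    (ContinuousLinearMap.pi fun i : Fin m =>
      ∑ j : Fin m, A i j ∘L ContinuousLinearMap.proj j) ∘L
      ((PiLp.continuousLinearEquiv 2 ℂ (fun _ : Fin m => H)) :
        (PiLp 2 fun _ : Fin m => H) →L[ℂ] ∀ _ : Fin m, H)

/-- A linear map `φ` from a subspace `V` of `B(H)` to `M_n(ℂ)` is completely contractive if
all of its amplifications to matrices over `V` are contractive. -/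
def IsCompletelyContractive {H : Type*} [NormedAddCommGroup H] [InnerProductSpace ℂ H]
    {V : Submodule ℂ (H →L[ℂ] H)} {n : ℕ}
    (φ : V →ₗ[ℂ] Matrix (Fin n) (Fin n) ℂ) : Prop :=
  ∀ (m : ℕ) (A : Fin m → Fin m → V),
    matOpNorm (Matrix.of fun p q : Fin m × Fin n => φ (A p.1 q.1) p.2 q.2) ≤
      ‖opMatrixToOp m fun i j => (A i j : H →L[ℂ] H)‖


/-!
Compressing to an orthonormal family `b₁, …, bₙ` gives unital completely contractive maps
`v ↦ (⟪b_p, v b_q⟫)`: the `m`-th amplification of the compression, applied to an operator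
matrix `A`, is `Q ∘ A ∘ P`, where the block synthesis map `P` is an isometry and the block
analysis map `Q` is a contraction (Bessel). Conversely, for `ξ ∈ Hᵏ` let `b` be an orthonormal
basis of the finite-dimensional span of the coordinates of `ξ` and of `Tξ`. Then `P (Q ξ) = ξ`
and `Q` is isometric on `Tξ`, so `‖Tξ‖ = ‖(Q ∘ T ∘ P) (Q ξ)‖ ≤ ‖Q ∘ T ∘ P‖ ‖ξ‖`.
-/

open scoped InnerProductSpace
open Submodule Set

section Orthonormal

variable {H : Type*} [NormedAddCommGroup H] [InnerProductSpace ℂ H] {ι : Type*} [Fintype ι]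
  {b : ι → H}

theorem Orthonormal.norm_sum_smul_sq (hb : Orthonormal ℂ b) (c : ι → ℂ) :
    ‖∑ i, c i • b i‖ ^ 2 = ∑ i, ‖c i‖ ^ 2 := by
  rw [← RCLike.ofReal_inj (K := ℂ)]
  push_cast
  rw [← inner_self_eq_norm_sq_to_K, hb.inner_sum]
  exact Finset.sum_congr rfl fun i _ => Complex.conj_mul' (c i)

theorem Orthonormal.sum_inner_smul_of_mem_span (hb : Orthonormal ℂ b) {v : H}
    (hv : v ∈ span ℂ (range b)) : ∑ i, ⟪b i, v⟫_ℂ • b i = v := by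
  obtain ⟨c, rfl⟩ := (mem_span_range_iff_exists_fun ℂ).1 hv
  simp only [hb.inner_right_fintype]

theorem Orthonormal.sum_sq_norm_inner_of_mem_span (hb : Orthonormal ℂ b) {v : H}
    (hv : v ∈ span ℂ (range b)) : ∑ i, ‖⟪b i, v⟫_ℂ‖ ^ 2 = ‖v‖ ^ 2 := by
  conv_rhs => rw [← hb.sum_inner_smul_of_mem_span hv]
  rw [hb.norm_sum_smul_sq]

theorem exists_orthonormal_span_eq {s : Set H} (hs : s.Finite) :
    ∃ (n : ℕ) (b : Fin n → H), Orthonormal ℂ b ∧ span ℂ (range b) = span ℂ s := by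
  have : FiniteDimensional ℂ (span ℂ s) := FiniteDimensional.span_of_finite ℂ hs
  let B := stdOrthonormalBasis ℂ (span ℂ s)
  refine ⟨_, (↑) ∘ B, B.orthonormal.comp_linearIsometry (span ℂ s).subtypeₗᵢ, ?_⟩
  rw [range_comp, ← (span ℂ s).coe_subtype, ← map_span, ← B.coe_toBasis, B.toBasis.span_eq,
    map_subtype_top]

end Orthonormal

section Compression

variable {H : Type*} [NormedAddCommGroup H] [InnerProductSpace ℂ H] {ι : Type*} {b : ι → H}

noncomputable def compression (b : ι → H) : (H →L[ℂ] H) →ₗ[ℂ] Matrix ι ι ℂ where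
  toFun v := Matrix.of fun p q => ⟪b p, v (b q)⟫_ℂ
  map_add' v w := by ext p q; simp
  map_smul' c v := by ext p q; simp

theorem compression_id [DecidableEq ι] (hb : Orthonormal ℂ b) :
    compression b (ContinuousLinearMap.id ℂ H) = 1 := by
  ext p q
  simp [compression, Matrix.one_apply, orthonormal_iff_ite.mp hb]

noncomputable def compressionMatrix (b : ι → H) {m : ℕ}
    (A : Fin m → Fin m → (H →L[ℂ] H)) :
    Matrix (Fin m × ι) (Fin m × ι) ℂ :=
  Matrix.of fun p q => compression b (A p.1 q.1) p.2 q.2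

noncomputable def blockAnalysis (m : ℕ) (b : ι → H) (y : PiLp 2 fun _ : Fin m => H) :
    EuclideanSpace ℂ (Fin m × ι) :=
  WithLp.toLp 2 fun p => ⟪b p.2, y p.1⟫_ℂ

variable [Fintype ι]

noncomputable def blockSynthesis (m : ℕ) (b : ι → H) (x : EuclideanSpace ℂ (Fin m × ι)) :
    PiLp 2 fun _ : Fin m => H :=
  WithLp.toLp 2 fun j => ∑ q, x (j, q) • b q

theorem norm_blockSynthesis (hb : Orthonormal ℂ b) {m : ℕ}
    (x : EuclideanSpace ℂ (Fin m × ι)) :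
    ‖blockSynthesis m b x‖ = ‖x‖ := by
  rw [← pow_left_inj₀ (norm_nonneg _) (norm_nonneg _) two_ne_zero, PiLp.norm_sq_eq_of_L2,
    PiLp.norm_sq_eq_of_L2, Fintype.sum_prod_type]
  exact Finset.sum_congr rfl fun j _ => hb.norm_sum_smul_sq _

theorem norm_blockAnalysis_le (hb : Orthonormal ℂ b) {m : ℕ} (y : PiLp 2 fun _ : Fin m => H) :
    ‖blockAnalysis m b y‖ ≤ ‖y‖ := by
  rw [← pow_le_pow_iff_left₀ (norm_nonneg _) (norm_nonneg _) two_ne_zero, PiLp.norm_sq_eq_of_L2,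
    PiLp.norm_sq_eq_of_L2, Fintype.sum_prod_type]
  exact Finset.sum_le_sum fun j _ => hb.sum_inner_products_le (y j)

theorem norm_blockAnalysis_of_mem_span (hb : Orthonormal ℂ b) {m : ℕ}
    {y : PiLp 2 fun _ : Fin m => H} (hy : ∀ j, y j ∈ span ℂ (range b)) :
    ‖blockAnalysis m b y‖ = ‖y‖ := by
  rw [← pow_left_inj₀ (norm_nonneg _) (norm_nonneg _) two_ne_zero, PiLp.norm_sq_eq_of_L2,
    PiLp.norm_sq_eq_of_L2, Fintype.sum_prod_type]
  exact Finset.sum_congr rfl fun j _ => hb.sum_sq_norm_inner_of_mem_span (hy j)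

theorem blockSynthesis_blockAnalysis (hb : Orthonormal ℂ b) {m : ℕ}
    {y : PiLp 2 fun _ : Fin m => H} (hy : ∀ j, y j ∈ span ℂ (range b)) :
    blockSynthesis m b (blockAnalysis m b y) = y := by
  ext j
  exact hb.sum_inner_smul_of_mem_span (hy j)

variable [DecidableEq ι]

theorem toEuclideanLin_compressionMatrix {m : ℕ}
    (A : Fin m → Fin m → (H →L[ℂ] H)) (x : EuclideanSpace ℂ (Fin m × ι)) :
    Matrix.toEuclideanLin (compressionMatrix b A) x =
      blockAnalysis m b (opMatrixToOp m A (blockSynthesis m b x)) := by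
  ext ⟨i, p⟩
  simp [compressionMatrix, compression, blockAnalysis, blockSynthesis, opMatrixToOp,
    Matrix.mulVec, dotProduct, Fintype.sum_prod_type, mul_comm]

theorem matOpNorm_compressionMatrix_le (hb : Orthonormal ℂ b) {m : ℕ}
    (A : Fin m → Fin m → (H →L[ℂ] H)) :
    matOpNorm (compressionMatrix b A) ≤ ‖opMatrixToOp m A‖ := by
  refine ContinuousLinearMap.opNorm_le_bound _ (opMatrixToOp m A).opNorm_nonneg fun x => ?_
  calc ‖Matrix.toEuclideanLin (compressionMatrix b A) x‖
      ≤ ‖opMatrixToOp m A (blockSynthesis m b x)‖ := by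
        rw [toEuclideanLin_compressionMatrix]
        exact norm_blockAnalysis_le hb _
    _ ≤ ‖opMatrixToOp m A‖ * ‖x‖ := by
        rw [← norm_blockSynthesis hb x]
        exact (opMatrixToOp m A).le_opNorm _

theorem isCompletelyContractive_compression {n : ℕ} {b : Fin n → H} (hb : Orthonormal ℂ b)
    (V : Submodule ℂ (H →L[ℂ] H)) :
    IsCompletelyContractive ((compression b).comp V.subtype) :=
  fun _ A => matOpNorm_compressionMatrix_le hb fun i j => (A i j : H →L[ℂ] H)

theorem norm_opMatrixToOp_apply_le_of_mem_span (hb : Orthonormal ℂ b) {m : ℕ}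
    (A : Fin m → Fin m → (H →L[ℂ] H)) {ξ : PiLp 2 fun _ : Fin m => H}
    (hξ : ∀ j, ξ j ∈ span ℂ (range b))
    (hAξ : ∀ i, opMatrixToOp m A ξ i ∈ span ℂ (range b)) :
    ‖opMatrixToOp m A ξ‖ ≤ matOpNorm (compressionMatrix b A) * ‖ξ‖ := by
  calc ‖opMatrixToOp m A ξ‖
      = ‖Matrix.toEuclideanLin (compressionMatrix b A) (blockAnalysis m b ξ)‖ := by
        rw [toEuclideanLin_compressionMatrix, blockSynthesis_blockAnalysis hb hξ,
          norm_blockAnalysis_of_mem_span hb hAξ]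
    _ ≤ matOpNorm (compressionMatrix b A) * ‖blockAnalysis m b ξ‖ :=
        (LinearMap.toContinuousLinearMap _).le_opNorm _
    _ = matOpNorm (compressionMatrix b A) * ‖ξ‖ := by
        rw [norm_blockAnalysis_of_mem_span hb hξ]

end Compression

theorem exists_orthonormal_norm_opMatrixToOp_apply_le {H : Type*} [NormedAddCommGroup H]
    [InnerProductSpace ℂ H] {m : ℕ} (A : Fin m → Fin m → (H →L[ℂ] H))
    {ξ : PiLp 2 fun _ : Fin m => H} (hξ : ξ ≠ 0) :
    ∃ (n : ℕ) (b : Fin n → H), 1 ≤ n ∧ Orthonormal ℂ b ∧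
      ‖opMatrixToOp m A ξ‖ ≤ matOpNorm (compressionMatrix b A) * ‖ξ‖ := by
  obtain ⟨n, b, hb, hspan⟩ := exists_orthonormal_span_eq
    ((finite_range fun j => ξ j).union (finite_range fun i => opMatrixToOp m A ξ i))
  have hξmem : ∀ j, ξ j ∈ span ℂ (range b) := fun j =>
    hspan ▸ subset_span (Or.inl ⟨j, rfl⟩)
  have hAξmem : ∀ i, opMatrixToOp m A ξ i ∈ span ℂ (range b) := fun i =>
    hspan ▸ subset_span (Or.inr ⟨i, rfl⟩)
  refine ⟨n, b, Nat.one_le_iff_ne_zero.2 ?_, hb,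
    norm_opMatrixToOp_apply_le_of_mem_span hb A hξmem hAξmem⟩
  rintro rfl
  refine hξ (PiLp.ext fun j => ?_)
  simpa [range_eq_empty] using hξmem j

theorem norm_opMatrix_eq_sSup_over_unital_completely_contractive_maps_general
    {H : Type*} [NormedAddCommGroup H] [InnerProductSpace ℂ H]
    (V : Submodule ℂ (H →L[ℂ] H)) (hid : ContinuousLinearMap.id ℂ H ∈ V)
    (k : ℕ) (T : Fin k → Fin k → (H →L[ℂ] H))
    (hT : ∀ i j, T i j ∈ V) :
    ‖opMatrixToOp k T‖ =
      sSup {r : ℝ | ∃ (n : ℕ) (φ : V →ₗ[ℂ] Matrix (Fin n) (Fin n) ℂ),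
        1 ≤ n ∧ IsCompletelyContractive φ ∧
          φ ⟨ContinuousLinearMap.id ℂ H, hid⟩ = 1 ∧
          r = matOpNorm (Matrix.of fun p q : Fin k × Fin n =>
            φ ⟨T p.1 q.1, hT p.1 q.1⟩ p.2 q.2)} := by
  set S := {r : ℝ | ∃ (n : ℕ) (φ : V →ₗ[ℂ] Matrix (Fin n) (Fin n) ℂ),
    1 ≤ n ∧ IsCompletelyContractive φ ∧ φ ⟨ContinuousLinearMap.id ℂ H, hid⟩ = 1 ∧
      r = matOpNorm (Matrix.of fun p q : Fin k × Fin n => φ ⟨T p.1 q.1, hT p.1 q.1⟩ p.2 q.2)}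
  have hS : ∀ r ∈ S, r ≤ ‖opMatrixToOp k T‖ := by
    rintro r ⟨n, φ, -, hφ, -, rfl⟩
    exact hφ k fun i j => ⟨T i j, hT i j⟩
  have hS_nonneg : ∀ r ∈ S, 0 ≤ r := by
    rintro r ⟨n, φ, -, -, -, rfl⟩
    exact norm_nonneg _
  refine le_antisymm (ContinuousLinearMap.opNorm_le_bound _ (Real.sSup_nonneg hS_nonneg)
    fun ξ => ?_) (Real.sSup_le hS (opMatrixToOp k T).opNorm_nonneg)
  rcases eq_or_ne ξ 0 with rfl | hξ
  · simp
  obtain ⟨n, b, hn, hb, hle⟩ := exists_orthonormal_norm_opMatrixToOp_apply_le T hξ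
  have hmem : matOpNorm (compressionMatrix b T) ∈ S :=
    ⟨n, (compression b).comp V.subtype, hn, isCompletelyContractive_compression hb V,
      compression_id hb, rfl⟩
  exact hle.trans (mul_le_mul_of_nonneg_right (le_csSup ⟨_, hS⟩ hmem) (norm_nonneg _))

theorem norm_opMatrix_eq_sSup_over_unital_completely_contractive_maps
    {H : Type*} [NormedAddCommGroup H] [InnerProductSpace ℂ H] [CompleteSpace H]
    (V : Submodule ℂ (H →L[ℂ] H)) (hid : ContinuousLinearMap.id ℂ H ∈ V)
    (k : ℕ) (hk : 1 ≤ k) (T : Fin k → Fin k → (H →L[ℂ] H))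
    (hT : ∀ i j, T i j ∈ V) :
    ‖opMatrixToOp k T‖ =
      sSup {r : ℝ | ∃ (n : ℕ) (φ : V →ₗ[ℂ] Matrix (Fin n) (Fin n) ℂ),
        1 ≤ n ∧ IsCompletelyContractive φ ∧
          φ ⟨ContinuousLinearMap.id ℂ H, hid⟩ = 1 ∧
          r = matOpNorm (Matrix.of fun p q : Fin k × Fin n =>
            φ ⟨T p.1 q.1, hT p.1 q.1⟩ p.2 q.2)} :=
  norm_opMatrix_eq_sSup_over_unital_completely_contractive_maps_general V hid k T hT
end
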